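/- The formal power series (equivalently, holomorphic function on the open unit disk) G(z) = Σ_{n=1}^∞ g(n) z^n is transcendental over the field of rational functions ℂ(z); i.e., there is no nonzero polynomial P(z, y) ∈ ℂ[z, y] with P(z, G(z)) = 0 for all |z| < 1. -/

import Mathlib

/-!
Writing `n = 2ᵏ(2j+1)`, the hypotheses give `g n = (-1)ʲ`, hence `G(z) = z/(1+z²) + G(z²)` and,
iterated, `G(z) = ∑_{k ≤ K} z^{2ᵏ}/(1 + z^{2^{k+1}}) + G(z^{2^{K+1}})`. If `ζ^{2^{K+1}} = -1`, the
`k = K` fraction has a pole at `ζ` while the earlier ones are continuous there; along the radius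
`rζ` the remainder `G(-r^{2^{K+1}})` is real, and `ζ^{2ᴷ} = ±i` puts the pole in the imaginary part,
so `‖G(rζ)‖ → ∞` as `r → 1⁻`. For a relation `P(z, G(z)) = 0` with leading coefficient `q`,
take `K = deg q`: among the `2^{K+1}` such `ζ` one has `q(ζ) ≠ 0`, and then Cauchy's bound on the
roots of `P(rζ, ·)` keeps `G(rζ)` bounded near `ζ`.
-/

open Filter Finset Topology Polynomial

noncomputable def genFun (g : ℕ → ℤ) (z : ℂ) : ℂ := ∑' n : ℕ, (g (n + 1) : ℂ) * z ^ (n + 1)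

section Coefficients

variable {g : ℕ → ℤ}

lemma eq_χ₄_of_odd (hg1 : g 1 = 1)
    (hgmul : ∀ m n : ℕ, 1 ≤ m → 1 ≤ n → g (m * n) = g m * g n)
    (hgp : ∀ p : ℕ, p.Prime → g p = if p % 4 = 3 then -1 else 1) {n : ℕ} (hn : Odd n) :
    g n = ZMod.χ₄ n := by
  induction n using Nat.recOnMul with
  | zero => exact absurd hn (by decide)
  | one => simp [hg1]
  | prime p hp =>
    have hp2 : p % 2 = 1 := Nat.odd_iff.1 hn
    rw [hgp p hp, ZMod.χ₄_nat_eq_if_mod_four]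
    split_ifs <;> omega
  | mul a b iha ihb =>
    obtain ⟨ha, hb⟩ := Nat.odd_mul.1 hn
    rw [hgmul a b ha.pos hb.pos, iha ha, ihb hb, Nat.cast_mul, map_mul]

lemma apply_two_mul_add_one (hg1 : g 1 = 1)
    (hgmul : ∀ m n : ℕ, 1 ≤ m → 1 ≤ n → g (m * n) = g m * g n)
    (hgp : ∀ p : ℕ, p.Prime → g p = if p % 4 = 3 then -1 else 1) (j : ℕ) :
    g (2 * j + 1) = (-1) ^ j := by
  rw [eq_χ₄_of_odd hg1 hgmul hgp (odd_two_mul_add_one j), ZMod.χ₄_eq_neg_one_pow (by omega)]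
  congr
  omega

lemma apply_two_mul (hgmul : ∀ m n : ℕ, 1 ≤ m → 1 ≤ n → g (m * n) = g m * g n)
    (hgp : ∀ p : ℕ, p.Prime → g p = if p % 4 = 3 then -1 else 1) {n : ℕ} (hn : 1 ≤ n) :
    g (2 * n) = g n := by
  rw [hgmul 2 n one_le_two hn, hgp 2 Nat.prime_two]
  simp

lemma abs_apply_le_one (hodd : ∀ j, g (2 * j + 1) = (-1) ^ j)
    (heven : ∀ n, 1 ≤ n → g (2 * n) = g n) {n : ℕ} (hn : 1 ≤ n) : |g n| ≤ 1 := by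
  induction n using Nat.strong_induction_on with
  | _ n ih =>
    obtain ⟨k, rfl | rfl⟩ := Nat.even_or_odd' n
    · rw [heven k (by omega)]
      exact ih k (by omega) (by omega)
    · simp [hodd]

lemma summable_genFun (hg : ∀ n, |g (n + 1)| ≤ 1) {z : ℂ} (hz : ‖z‖ < 1) :
    Summable fun n ↦ (g (n + 1) : ℂ) * z ^ (n + 1) := by
  refine .of_norm_bounded ((summable_geometric_of_lt_one (norm_nonneg z) hz).comp_injective
    (add_left_injective 1)) fun n ↦ ?_
  rw [norm_mul, norm_pow, Complex.norm_intCast, Function.comp_apply]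
  exact mul_le_of_le_one_left (by positivity) (mod_cast hg n)

lemma im_genFun_ofReal (x : ℝ) : (genFun g x).im = 0 := by
  have : genFun g x = ((∑' n : ℕ, (g (n + 1) : ℝ) * x ^ (n + 1) : ℝ) : ℂ) := by
    rw [genFun, Complex.ofReal_tsum]
    push_cast
    rfl
  rw [this, Complex.ofReal_im]

lemma hasSum_neg_one_pow_mul_pow {z : ℂ} (hz : ‖z‖ < 1) :
    HasSum (fun j : ℕ ↦ (-1) ^ j * z ^ (2 * j + 1)) (z / (1 + z ^ 2)) := by
  have hz2 : ‖-z ^ 2‖ < 1 := by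
    rw [norm_neg, norm_pow]
    nlinarith [norm_nonneg z]
  have hsum := (hasSum_geometric_of_norm_lt_one hz2).mul_left z
  rw [sub_neg_eq_add, ← div_eq_mul_inv] at hsum
  have hterm : (fun j : ℕ ↦ (-1) ^ j * z ^ (2 * j + 1)) = fun j ↦ z * (-z ^ 2) ^ j := by
    funext j
    rw [neg_pow, pow_succ, pow_mul]
    ring
  rwa [hterm]

theorem genFun_eq_add_genFun_sq (hodd : ∀ j, g (2 * j + 1) = (-1) ^ j)
    (heven : ∀ n, 1 ≤ n → g (2 * n) = g n) {z : ℂ} (hz : ‖z‖ < 1) :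
    genFun g z = z / (1 + z ^ 2) + genFun g (z ^ 2) := by
  have hg n : |g (n + 1)| ≤ 1 := abs_apply_le_one hodd heven (by omega)
  have hz2 : ‖z ^ 2‖ < 1 := by
    rw [norm_pow]
    nlinarith [norm_nonneg z]
  refine HasSum.tsum_eq (HasSum.even_add_odd ?_ ?_)
  · simpa [hodd] using hasSum_neg_one_pow_mul_pow hz
  · rw [genFun]
    convert (summable_genFun hg hz2).hasSum using 2 with j
    rw [show 2 * j + 1 + 1 = 2 * (j + 1) by ring, heven _ (by omega), pow_mul]

end Coefficients

lemma eq_sum_add_pow_of_eq_add_sq {F : ℂ → ℂ}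
    (hF : ∀ z : ℂ, ‖z‖ < 1 → F z = z / (1 + z ^ 2) + F (z ^ 2)) {z : ℂ} (hz : ‖z‖ < 1) (N : ℕ) :
    F z = ∑ k ∈ range N, z ^ 2 ^ k / (1 + (z ^ 2 ^ k) ^ 2) + F (z ^ 2 ^ N) := by
  induction N with
  | zero => simp
  | succ N ih =>
    have hzN : ‖z ^ 2 ^ N‖ < 1 := by
      rw [norm_pow]
      exact pow_lt_one₀ (norm_nonneg z) hz (by positivity)
    rw [ih, hF _ hzN, sum_range_succ, ← pow_mul, ← pow_succ, add_assoc]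

lemma norm_eq_one_of_pow_eq_neg_one {ζ : ℂ} {n : ℕ} (hζ : ζ ^ n = -1) : ‖ζ‖ = 1 := by
  have hn : n ≠ 0 := by
    rintro rfl
    norm_num at hζ
  rw [← pow_eq_one_iff_of_nonneg (norm_nonneg ζ) hn, ← norm_pow, hζ, norm_neg, norm_one]

lemma norm_ofReal_mul_lt_one {ζ : ℂ} (hζ : ‖ζ‖ = 1) {r : ℝ} (hr : |r| < 1) :
    ‖(r : ℂ) * ζ‖ < 1 := by
  rwa [norm_mul, hζ, mul_one, Complex.norm_real, Real.norm_eq_abs]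

lemma eventually_abs_lt_one_nhdsLT : ∀ᶠ r : ℝ in 𝓝[<] 1, |r| < 1 := by
  filter_upwards [Ioo_mem_nhdsLT (show (-1 : ℝ) < 1 by norm_num)] with r hr
  exact abs_lt.2 hr

lemma tendsto_ofReal_mul_nhdsLT_one (ζ : ℂ) :
    Tendsto (fun r : ℝ ↦ (r : ℂ) * ζ) (𝓝[<] 1) (𝓝 ζ) := by
  simpa using ((by fun_prop : Continuous fun r : ℝ ↦ (r : ℂ) * ζ).tendsto 1).mono_left
    nhdsWithin_le_nhds

lemma one_add_sq_pow_two_pow_ne_zero {ζ : ℂ} {K k : ℕ} (hζ : ζ ^ 2 ^ (K + 1) = -1)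
    (hk : k < K) : 1 + (ζ ^ 2 ^ k) ^ 2 ≠ 0 := by
  intro h
  have hk' : ζ ^ 2 ^ (k + 1) = -1 := by
    rw [pow_succ, pow_mul]
    linear_combination h
  have : ζ ^ 2 ^ (K + 1) = 1 := by
    rw [show 2 ^ (K + 1) = 2 ^ (k + 1) * 2 ^ (K - k) by rw [← pow_add]; congr 1; omega,
      pow_mul, hk', (Nat.even_pow.2 ⟨even_two, by omega⟩).neg_one_pow]
  norm_num [hζ] at this

lemma abs_im_mul_div_one_add_sq {w : ℂ} (hw : w ^ 2 = -1) (s : ℝ) :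
    |((s * w) / (1 + (s * w) ^ 2)).im| = |s / (1 - s ^ 2)| := by
  have hw' : |w.im| = 1 := by
    have : (w - Complex.I) * (w + Complex.I) = 0 := by
      linear_combination hw - Complex.I_sq
    rcases mul_eq_zero.1 this with h | h
    · simp [sub_eq_zero.1 h]
    · simp [eq_neg_of_add_eq_zero_left h]
  rw [mul_pow, hw, show (1 : ℂ) + s ^ 2 * -1 = ((1 - s ^ 2 : ℝ) : ℂ) by push_cast; ring,
    Complex.div_ofReal_im, Complex.im_ofReal_mul, abs_div, abs_mul, hw', mul_one, abs_div]

lemma tendsto_pow_nhdsLT_one {n : ℕ} (hn : n ≠ 0) :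
    Tendsto (fun r : ℝ ↦ r ^ n) (𝓝[<] 1) (𝓝[<] 1) := by
  refine tendsto_nhdsWithin_iff.2 ⟨?_, ?_⟩
  · simpa using ((continuous_pow n).tendsto (1 : ℝ)).mono_left nhdsWithin_le_nhds
  · filter_upwards [Ioo_mem_nhdsLT one_pos] with r hr
    exact pow_lt_one₀ hr.1.le hr.2 hn

lemma tendsto_div_one_sub_sq_atTop :
    Tendsto (fun s : ℝ ↦ s / (1 - s ^ 2)) (𝓝[<] 1) atTop := by
  have hden : Tendsto (fun s : ℝ ↦ 1 - s ^ 2) (𝓝[<] 1) (𝓝[>] 0) := by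
    refine tendsto_nhdsWithin_iff.2 ⟨?_, ?_⟩
    · simpa using ((by fun_prop : Continuous fun s : ℝ ↦ 1 - s ^ 2).tendsto 1).mono_left
        nhdsWithin_le_nhds
    · filter_upwards [Ioo_mem_nhdsLT one_pos] with s hs
      simp only [Set.mem_Ioi, sub_pos]
      exact pow_lt_one₀ hs.1.le hs.2 two_ne_zero
  exact Tendsto.pos_mul_atTop one_pos (tendsto_nhdsWithin_of_tendsto_nhds tendsto_id)
    (tendsto_inv_nhdsGT_zero.comp hden)

theorem tendsto_norm_atTop_of_eq_add_sq {F : ℂ → ℂ}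
    (hF : ∀ z : ℂ, ‖z‖ < 1 → F z = z / (1 + z ^ 2) + F (z ^ 2))
    (hreal : ∀ x : ℝ, |x| < 1 → (F x).im = 0) {ζ : ℂ} {K : ℕ} (hζ : ζ ^ 2 ^ (K + 1) = -1) :
    Tendsto (fun r : ℝ ↦ ‖F (r * ζ)‖) (𝓝[<] 1) atTop := by
  set H : ℂ → ℂ := fun z ↦ ∑ k ∈ range K, z ^ 2 ^ k / (1 + (z ^ 2 ^ k) ^ 2)
  have hHζ : ContinuousAt H ζ :=
    tendsto_finsetSum _ fun k hk ↦ (continuous_pow _).continuousAt.div (by fun_prop)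
      (one_add_sq_pow_two_pow_ne_zero hζ (mem_range.1 hk))
  have hw : (ζ ^ 2 ^ K) ^ 2 = -1 := by rw [← pow_mul, ← pow_succ, hζ]
  have hpole :=
    tendsto_div_one_sub_sq_atTop.comp (tendsto_pow_nhdsLT_one (n := 2 ^ K) (by positivity))
  have hhead := (hHζ.tendsto.comp (tendsto_ofReal_mul_nhdsLT_one ζ)).norm
  refine tendsto_atTop_mono' _ ?_ (hpole.atTop_add hhead.neg)
  filter_upwards [eventually_abs_lt_one_nhdsLT] with r hr
  have hz := norm_ofReal_mul_lt_one (norm_eq_one_of_pow_eq_neg_one hζ) hr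
  set s := r ^ 2 ^ K
  set t := (s * ζ ^ 2 ^ K) / (1 + (s * ζ ^ 2 ^ K) ^ 2)
  have hsplit : F (r * ζ) = H (r * ζ) + t + F (-r ^ 2 ^ (K + 1) : ℝ) := by
    rw [eq_sum_add_pow_of_eq_add_sq hF hz (K + 1), sum_range_succ, mul_pow (r : ℂ) ζ (2 ^ K),
      mul_pow (r : ℂ) ζ (2 ^ (K + 1)), hζ]
    simp only [t, s, Complex.ofReal_neg, Complex.ofReal_pow, mul_neg_one]
    rfl
  have hreal' : (F (-r ^ 2 ^ (K + 1) : ℝ)).im = 0 := by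
    refine hreal _ ?_
    rw [abs_neg, abs_pow]
    exact pow_lt_one₀ (abs_nonneg r) hr (by positivity)
  calc s / (1 - s ^ 2) + -‖H (r * ζ)‖ ≤ |t.im| - |(H (r * ζ)).im| := by
        rw [abs_im_mul_div_one_add_sq hw]
        linarith [le_abs_self (s / (1 - s ^ 2)), Complex.abs_im_le_norm (H (r * ζ))]
    _ ≤ |t.im + (H (r * ζ)).im| := abs_sub_abs_le_abs_add _ _
    _ = |(F (r * ζ)).im| := by
        rw [hsplit, Complex.add_im, Complex.add_im, hreal', add_zero, add_comm]
    _ ≤ ‖F (r * ζ)‖ := Complex.abs_im_le_norm _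

lemma exists_pow_two_pow_eq_neg_one_eval_ne_zero {q : ℂ[X]} (hq : q ≠ 0) :
    ∃ ζ : ℂ, ζ ^ 2 ^ (q.natDegree + 1) = -1 ∧ q.eval ζ ≠ 0 := by
  by_contra! h
  refine hq (eq_zero_of_natDegree_lt_card_of_eval_eq_zero' q
    (primitiveRoots (2 ^ (q.natDegree + 2)) ℂ) (fun ζ hζ ↦ h ζ ?_) ?_)
  · have hprim := ((mem_primitiveRoots (by positivity)).1 hζ).pow_of_dvd
      (p := 2 ^ (q.natDegree + 1)) (by positivity) (pow_dvd_pow 2 (by omega))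
    rw [pow_succ 2 (q.natDegree + 1), Nat.mul_div_cancel_left _ (by positivity)] at hprim
    exact hprim.eq_neg_one_of_two_right
  · rw [Complex.card_primitiveRoots, Nat.totient_prime_pow_succ Nat.prime_two]
    simpa using Nat.lt_two_pow_self.trans (Nat.pow_lt_pow_right one_lt_two (Nat.lt_succ_self _))

lemma isBoundedUnder_norm_of_eval₂_eq_zero {α : Type*} {l : Filter α} {u f : α → ℂ} {ζ : ℂ}
    {P : ℂ[X][X]} (hu : Tendsto u l (𝓝 ζ)) (hζ : P.leadingCoeff.eval ζ ≠ 0)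
    (hP : ∀ᶠ x in l, P.eval₂ (evalRingHom (u x)) (f x) = 0) :
    IsBoundedUnder (· ≤ ·) l fun x ↦ ‖f x‖ := by
  have hcoeff i : Tendsto (fun x ↦ (P.coeff i).eval (u x)) l (𝓝 ((P.coeff i).eval ζ)) :=
    ((P.coeff i).continuous.tendsto ζ).comp hu
  have hbound : Tendsto (fun x ↦ (∑ i ∈ range P.natDegree, ‖(P.coeff i).eval (u x)‖) /
      ‖P.leadingCoeff.eval (u x)‖ + 1) l _ :=
    ((tendsto_finsetSum _ fun i _ ↦ (hcoeff i).norm).div (hcoeff _).norm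
      (norm_ne_zero_iff.2 hζ)).add_const 1
  refine hbound.isBoundedUnder_le.mono_le ?_
  filter_upwards [hP, (hcoeff P.natDegree).eventually_ne hζ] with x hx hne
  set Q := P.map (evalRingHom (u x))
  have hdeg : Q.natDegree = P.natDegree := natDegree_map_of_leadingCoeff_ne_zero _ hne
  have hlc : Q.leadingCoeff = P.leadingCoeff.eval (u x) :=
    leadingCoeff_map_of_leadingCoeff_ne_zero _ hne
  have hQ : Q ≠ 0 := by
    rw [← leadingCoeff_ne_zero, hlc]
    exact hne
  have hroot := (show Q.IsRoot (f x) by rwa [IsRoot, eval_map]).norm_lt_cauchyBound hQ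
  refine (NNReal.coe_lt_coe.2 hroot).le.trans ?_
  rw [cauchyBound, hdeg, hlc]
  push_cast
  gcongr
  have hsup : (range P.natDegree).sup (‖Q.coeff ·‖₊) ≤
      ∑ i ∈ range P.natDegree, ‖(P.coeff i).eval (u x)‖₊ := by
    refine Finset.sup_le fun i hi ↦ ?_
    rw [coeff_map, coe_evalRingHom]
    exact single_le_sum (f := fun i ↦ ‖(P.coeff i).eval (u x)‖₊) (fun _ _ ↦ by positivity) hi
  exact (NNReal.coe_le_coe.2 hsup).trans_eq (by simp)

/-- `G(z) = Σ_{n≥1} g(n) zⁿ` is transcendental over `ℂ(z)`: no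
nonzero `P(z,y) ∈ ℂ[z][y]` satisfies `P(z, G(z)) = 0` for all `|z| < 1`. -/
theorem stmt_8 (g : ℕ → ℤ)
    (hg1 : g 1 = 1)
    (hgmul : ∀ m n : ℕ, 1 ≤ m → 1 ≤ n → g (m * n) = g m * g n)
    (hgp : ∀ p : ℕ, p.Prime → g p = if p % 4 = 3 then -1 else 1) :
    ¬ ∃ P : Polynomial (Polynomial ℂ), P ≠ 0 ∧
      ∀ z : ℂ, ‖z‖ < 1 →
        Polynomial.eval₂ (Polynomial.evalRingHom z)
          (∑' n : ℕ, (g (n + 1) : ℂ) * z ^ (n + 1)) P = 0 := by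
  rintro ⟨P, hP0, hPz⟩
  obtain ⟨ζ, hζ, hPζ⟩ := exists_pow_two_pow_eq_neg_one_eval_ne_zero (leadingCoeff_ne_zero.2 hP0)
  have hfun (z : ℂ) (hz : ‖z‖ < 1) : genFun g z = z / (1 + z ^ 2) + genFun g (z ^ 2) :=
    genFun_eq_add_genFun_sq (apply_two_mul_add_one hg1 hgmul hgp)
      (fun _ ↦ apply_two_mul hgmul hgp) hz
  have hblowup := tendsto_norm_atTop_of_eq_add_sq hfun (fun x _ ↦ im_genFun_ofReal x) hζ
  refine not_isBoundedUnder_of_tendsto_atTop hblowup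
    (isBoundedUnder_norm_of_eval₂_eq_zero (tendsto_ofReal_mul_nhdsLT_one ζ) hPζ ?_)
  filter_upwards [eventually_abs_lt_one_nhdsLT] with r hr
  exact hPz _ (norm_ofReal_mul_lt_one (norm_eq_one_of_pow_eq_neg_one hζ) hr)
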